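/- Assume n > 0 and let r = k(d−1) + n·d(d−1)/2 − (d−1). If μ = (p_1, …, p_r) is an r-marking on the curve Γ satisfying property (*), then for every permutation τ of {1, …, r} the r-marking τ(μ) = (p_{τ(1)}, …, p_{τ(r)}) is equivalent to μ under D-moves and T-moves. -/

import Mathlib

namespace SeveriMarkings

/-- Components of the curve Γ: `L_1, …, L_d` (left) and `F_1, …, F_k` (right). -/
abbrev Comp (d k : ℕ) := Sum (Fin d) (Fin k)

/-- Nodes (edges of the multigraph `G(n,d,k)`): `n` edges between `L_i` and `L_j` for `i < j`,
and one edge between each `L_i` and each `F_j`. -/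
abbrev Node (n d k : ℕ) :=
  Sum (({p : Fin d × Fin d // p.1 < p.2}) × Fin n) (Fin d × Fin k)

/-- The two endpoints of a node. -/
def ends {n d k : ℕ} : Node n d k → Comp d k × Comp d k
  | Sum.inl e => (Sum.inl e.1.1.1, Sum.inl e.1.1.2)
  | Sum.inr e => (Sum.inl e.1, Sum.inr e.2)

/-- `joins e C C'` means the node `e` lies in `C ∩ C'`. -/
def joins {n d k : ℕ} (e : Node n d k) (C C' : Comp d k) : Prop :=
  ends e = (C, C') ∨ ends e = (C', C)

/-- `touches e C` means the node `e` is incident to the component `C`. -/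
def touches {n d k : ℕ} (e : Node n d k) (C : Comp d k) : Prop :=
  (ends e).1 = C ∨ (ends e).2 = C

/-- The simple graph on the components obtained after deleting a set `E` of edges:
two components are adjacent if some remaining edge joins them. Its connectivity is
equivalent to connectivity of the multigraph obtained from `G(n,d,k)` by deleting `E`. -/
def remGraph (n d k : ℕ) (E : Set (Node n d k)) : SimpleGraph (Comp d k) :=
  SimpleGraph.fromRel (fun u v => ∃ e, e ∉ E ∧ ends e = (u, v))

/-- A marking `μ` (an injective tuple of nodes) is irreducible if deleting its entries
from `G(n,d,k)` leaves a connected (multi)graph. -/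
def IsIrreducible {n d k r : ℕ} (μ : Fin r → Node n d k) : Prop :=
  (remGraph n d k (Set.range μ)).Connected

/-- The intersection number `C.C'`: the number of edges between `C` and `C'`. -/
noncomputable def interNum (n d k : ℕ) (C C' : Comp d k) : ℕ :=
  Nat.card {e : Node n d k // joins e C C'}

/-- `μ_{C,C'}`: the number of entries of `μ` lying in `C ∩ C'`. -/
noncomputable def markCount {n d k r : ℕ} (μ : Fin r → Node n d k) (C C' : Comp d k) : ℕ :=
  Nat.card {i : Fin r // joins (μ i) C C'}

/-- `μ_C`: the number of entries of `μ` incident to `C`. -/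
noncomputable def compCount {n d k r : ℕ} (μ : Fin r → Node n d k) (C : Comp d k) : ℕ :=
  Nat.card {i : Fin r // touches (μ i) C}

/-- A single D-move. -/
def DMove {n d k r : ℕ} (μ μ' : Fin r → Node n d k) : Prop :=
  ∃ (D D' : Comp d k) (q q' : Node n d k),
    D ≠ D' ∧ q ≠ q' ∧ joins q D D' ∧ joins q' D D' ∧
    ( (q ∉ Set.range μ ∧ ∃ i, μ i = q' ∧ μ' = Function.update μ i q)
    ∨ (q' ∉ Set.range μ ∧ ∃ i, μ i = q ∧ μ' = Function.update μ i q')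
    ∨ (∃ i j, μ i = q ∧ μ j = q' ∧ μ' = μ ∘ Equiv.swap i j)
    ∨ (q ∉ Set.range μ ∧ q' ∉ Set.range μ ∧ μ' = μ) )

/-- A single T-move. -/
def TMove {n d k r : ℕ} (μ μ' : Fin r → Node n d k) : Prop :=
  ∃ (D D' D'' : Comp d k) (q q' q'' : Node n d k),
    D ≠ D' ∧ D ≠ D'' ∧ D' ≠ D'' ∧
    joins q D' D'' ∧ joins q' D D'' ∧ joins q'' D D' ∧
    ( (q' ∈ Set.range μ ∧ μ' = μ)
    ∨ (q' ∉ Set.range μ ∧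
        ( (q'' ∉ Set.range μ ∧ ∃ i, μ i = q ∧ μ' = Function.update μ i q'')
        ∨ (q ∉ Set.range μ ∧ ∃ i, μ i = q'' ∧ μ' = Function.update μ i q)
        ∨ (∃ i j, μ i = q ∧ μ j = q'' ∧ μ' = μ ∘ Equiv.swap i j)
        ∨ (q ∉ Set.range μ ∧ q'' ∉ Set.range μ ∧ μ' = μ))) )

/-- Equivalence of markings: a finite sequence of D-moves and T-moves. -/
def MarkEquiv {n d k r : ℕ} (μ μ' : Fin r → Node n d k) : Prop :=
  Relation.ReflTransGen (fun a b => DMove a b ∨ TMove a b) μ μ'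

/-- Property (*) relative to the distinguished component `Ld`. -/
def PropertyStar {n d k r : ℕ} (Ld : Comp d k) (μ : Fin r → Node n d k) : Prop :=
  ∀ C C' : Comp d k, C ≠ C' →
    markCount μ C C' =
      if Ld = C ∨ Ld = C' then interNum n d k C C' - 1 else interNum n d k C C'

/-! Every transposition of positions is a composite of moves. Property (*) marks every node
off `L_d` and leaves an unmarked node on each `C ∩ L_d` with `C ≠ L_d` (nonempty as `n > 0`).
Two marked nodes on a common component `X`, lying on `X ∩ Y` and `X ∩ Z`, are exchanged by a
D-move if `Y = Z`, and by a T-move through an unmarked node of `Y ∩ Z` if `L_d ∈ {Y, Z}`. If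
`X = L_d`, conjugate by a node of `Y ∩ Z`, which is marked. Otherwise move one of them to the
unmarked node of `X ∩ L_d`, exchange, and move it back. Two marked nodes without a common
component lie on distinct `L_a, L_c ≠ L_d`, and a node of `L_a ∩ L_c` conjugates one to the
other. -/

open Function Relation

variable {n d k : ℕ}

lemma ends_fst_ne_snd (e : Node n d k) : (ends e).1 ≠ (ends e).2 := by
  rcases e with ⟨⟨⟨a, b⟩, hab⟩, t⟩ | ⟨a, f⟩
  · simpa [ends] using hab.ne
  · simp [ends]

lemma joins.symm {e : Node n d k} {C C' : Comp d k} (h : joins e C C') : joins e C' C :=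
  Or.symm h

lemma joins.ne {e : Node n d k} {C C' : Comp d k} (h : joins e C C') : C ≠ C' := by
  have := ends_fst_ne_snd e
  rcases h with h | h <;> rw [h] at this
  exacts [this, this.symm]

lemma ne_of_joins_of_joins {u w : Node n d k} {A B C : Comp d k}
    (hu : joins u A B) (hw : joins w A C) (hBC : B ≠ C) : u ≠ w := by
  rintro rfl
  rcases hu with hu | hu <;> rcases hw with hw | hw <;> rw [hu, Prod.mk.injEq] at hw <;>
    grind

lemma joins_inl_inr_iff {e : Node n d k} {a : Fin d} {f : Fin k} :
    joins e (Sum.inl a) (Sum.inr f) ↔ e = Sum.inr (a, f) := by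
  rcases e with ⟨⟨⟨b, c⟩, h⟩, t⟩ | ⟨b, g⟩ <;> simp [joins, ends, eq_comm]

lemma interNum_inl_inr (a : Fin d) (f : Fin k) :
    interNum n d k (Sum.inl a) (Sum.inr f) = 1 :=
  Nat.card_eq_one_iff_exists.2
    ⟨⟨Sum.inr (a, f), joins_inl_inr_iff.2 rfl⟩,
      fun ⟨_, he⟩ => Subtype.ext (joins_inl_inr_iff.1 he)⟩

lemma exists_joins_inl_inl (hn : 0 < n) {a b : Fin d} (hab : a ≠ b) :
    ∃ e : Node n d k, joins e (Sum.inl a) (Sum.inl b) := by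
  rcases hab.lt_or_gt with h | h
  · exact ⟨Sum.inl ⟨⟨(a, b), h⟩, ⟨0, hn⟩⟩, Or.inl rfl⟩
  · exact ⟨Sum.inl ⟨⟨(b, a), h⟩, ⟨0, hn⟩⟩, Or.inr rfl⟩

lemma exists_joins_inl (hn : 0 < n) {C : Comp d k} {a : Fin d} (hC : C ≠ Sum.inl a) :
    ∃ e : Node n d k, joins e C (Sum.inl a) := by
  rcases C with b | f
  · exact exists_joins_inl_inl hn fun h => hC (congrArg _ h)
  · exact ⟨Sum.inr (a, f), Or.inr rfl⟩

lemma exists_joins_inl_ne {ℓ : Fin d} (e : Node n d k) (he : ∀ f, e ≠ Sum.inr (ℓ, f)) :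
    ∃ a W, a ≠ ℓ ∧ joins e (Sum.inl a) W := by
  rcases e with ⟨⟨⟨a, b⟩, hab⟩, t⟩ | ⟨a, f⟩
  · by_cases ha : a = ℓ
    · exact ⟨b, Sum.inl a, ha ▸ hab.ne', Or.inr rfl⟩
    · exact ⟨a, Sum.inl b, ha, Or.inl rfl⟩
  · exact ⟨a, Sum.inr f, fun h => he f (h ▸ rfl), Or.inl rfl⟩

lemma notMem_range_update {ι β : Type*} [DecidableEq ι] {f : ι → β} {i : ι} {u w : β}
    (hf : ∀ x ≠ i, f x ≠ w) (hwu : w ≠ u) : w ∉ Set.range (update f i u) := by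
  rintro ⟨x, hx⟩
  by_cases hxi : x = i
  · subst hxi
    exact hwu (by simpa using hx.symm)
  · exact hf x hxi (by simpa [hxi] using hx)

lemma swap_mul_swap_mul_swap_of_ne {α : Type*} [DecidableEq α] {i j m : α}
    (hij : i ≠ j) (him : i ≠ m) (hjm : j ≠ m) :
    Equiv.swap i m * Equiv.swap i j * Equiv.swap m j = Equiv.swap i j := by
  ext x
  simp only [Equiv.Perm.coe_mul, comp_apply, Equiv.swap_apply_def]
  split_ifs <;> simp_all

section Markings

variable {r : ℕ} {ν : Fin r → Node n d k}

lemma markCount_comp_perm (σ : Equiv.Perm (Fin r)) (C C' : Comp d k) :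
    markCount (ν ∘ σ) C C' = markCount ν C C' :=
  Nat.card_congr (Equiv.subtypeEquiv σ fun _ => Iff.rfl)

lemma PropertyStar.comp_perm {L : Comp d k} (hs : PropertyStar L ν) (σ : Equiv.Perm (Fin r)) :
    PropertyStar L (ν ∘ σ) :=
  fun C C' h => by rw [markCount_comp_perm]; exact hs C C' h

variable {ℓ : Fin d}

lemma PropertyStar.mem_range (hs : PropertyStar (Sum.inl ℓ) ν) (hinj : Injective ν)
    {e : Node n d k} {C C' : Comp d k} (he : joins e C C')
    (hC : C ≠ Sum.inl ℓ) (hC' : C' ≠ Sum.inl ℓ) : e ∈ Set.range ν := by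
  have hcount : markCount ν C C' = interNum n d k C C' := by
    simpa [hC.symm, hC'.symm] using hs C C' he.ne
  have hbij : Bijective fun i : {i // joins (ν i) C C'} =>
      (⟨ν i, i.2⟩ : {e : Node n d k // joins e C C'}) :=
    Injective.bijective_of_nat_card_le
      (fun _ _ h => Subtype.ext (hinj (congrArg Subtype.val h))) hcount.ge
  obtain ⟨⟨i, _⟩, hi⟩ := hbij.2 ⟨e, he⟩
  exact ⟨i, congrArg Subtype.val hi⟩

lemma PropertyStar.exists_notMem_range (hn : 0 < n) (hs : PropertyStar (Sum.inl ℓ) ν)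
    {C : Comp d k} (hC : C ≠ Sum.inl ℓ) :
    ∃ u, joins u C (Sum.inl ℓ) ∧ u ∉ Set.range ν := by
  by_contra! h
  obtain ⟨e, he⟩ := exists_joins_inl hn hC
  have hsurj : Surjective fun i : {i // joins (ν i) C (Sum.inl ℓ)} =>
      (⟨ν i, i.2⟩ : {e : Node n d k // joins e C (Sum.inl ℓ)}) := by
    rintro ⟨e, he⟩
    obtain ⟨i, rfl⟩ := h e he
    exact ⟨⟨i, he⟩, rfl⟩
  have hle := Nat.card_le_card_of_surjective _ hsurj
  have hpos : 0 < interNum n d k C (Sum.inl ℓ) := Nat.card_pos_iff.2 ⟨⟨⟨e, he⟩⟩, inferInstance⟩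
  have hcount := hs C (Sum.inl ℓ) he.ne
  rw [if_pos (Or.inr rfl)] at hcount
  simp only [markCount, interNum] at hcount hpos
  omega

lemma PropertyStar.ne_inr (hs : PropertyStar (Sum.inl ℓ) ν) (i : Fin r) (f : Fin k) :
    ν i ≠ Sum.inr (ℓ, f) := by
  intro h
  have hcount := hs (Sum.inl ℓ) (Sum.inr f) Sum.inl_ne_inr
  rw [if_pos (Or.inl rfl), interNum_inl_inr, markCount] at hcount
  exact (Nat.card_pos_iff.2 ⟨⟨⟨i, joins_inl_inr_iff.2 h⟩⟩, inferInstance⟩).ne' hcount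

end Markings

section Moves

variable {r : ℕ} {ν : Fin r → Node n d k} {i j : Fin r} {X Y Z L : Comp d k}

lemma dMove_comp_swap (hij : ν i ≠ ν j) (hi : joins (ν i) X Y) (hj : joins (ν j) X Y) :
    DMove ν (ν ∘ Equiv.swap i j) :=
  ⟨X, Y, ν i, ν j, hi.ne, hij, hi, hj, Or.inr (Or.inr (Or.inl ⟨i, j, rfl, rfl, rfl⟩))⟩

lemma tMove_comp_swap {u : Node n d k} (hi : joins (ν i) X Y) (hj : joins (ν j) X Z)
    (hu : joins u Y Z) (hur : u ∉ Set.range ν) : TMove ν (ν ∘ Equiv.swap i j) :=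
  ⟨Z, X, Y, ν i, u, ν j, hj.ne.symm, hu.ne.symm, hi.ne, hi, hu.symm, hj.symm,
    Or.inr ⟨hur, Or.inr (Or.inr (Or.inl ⟨i, j, rfl, rfl, rfl⟩))⟩⟩

lemma tMove_update {u w : Node n d k} (hi : joins (ν i) X Y) (hu : joins u X L)
    (hw : joins w Y L) (hur : u ∉ Set.range ν) (hwr : w ∉ Set.range ν) :
    TMove ν (update ν i u) :=
  ⟨L, X, Y, ν i, w, u, hu.ne.symm, hw.ne.symm, hi.ne, hi, hw.symm, hu.symm,
    Or.inr ⟨hwr, Or.inl ⟨hur, i, rfl, rfl⟩⟩⟩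

lemma tMove_update_of_apply_eq {p u w : Node n d k} (hi : ν i = u) (hp : joins p X Y)
    (hu : joins u X L) (hw : joins w Y L) (hpr : p ∉ Set.range ν) (hwr : w ∉ Set.range ν) :
    TMove ν (update ν i p) :=
  ⟨L, X, Y, p, w, u, hu.ne.symm, hw.ne.symm, hp.ne, hp, hw.symm, hu.symm,
    Or.inr ⟨hwr, Or.inr (Or.inl ⟨hpr, i, hi, rfl⟩)⟩⟩

end Moves

def Swappable (ℓ : Fin d) (p q : Node n d k) : Prop :=
  ∀ ⦃r : ℕ⦄ (ν : Fin r → Node n d k), Injective ν → PropertyStar (Sum.inl ℓ) ν →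
    ∀ i j, ν i = p → ν j = q → MarkEquiv ν (ν ∘ Equiv.swap i j)

section Swappable

variable {ℓ : Fin d} {p q m : Node n d k} {X Y Z : Comp d k}

lemma Swappable.symm (h : Swappable ℓ p q) : Swappable ℓ q p := by
  intro r ν hinj hs i j hi hj
  rw [Equiv.swap_comm]
  exact h ν hinj hs j i hj hi

lemma Swappable.trans (hpm : Swappable ℓ p m) (hmq : Swappable ℓ m q) (hp : p ≠ m) (hq : q ≠ m)
    {a b : Fin d} (hm : joins m (Sum.inl a) (Sum.inl b)) (ha : a ≠ ℓ) (hb : b ≠ ℓ) :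
    Swappable ℓ p q := by
  intro r ν hinj hs i j hi hj
  obtain ⟨i', rfl⟩ := hs.mem_range hinj hm (Sum.inl_injective.ne ha) (Sum.inl_injective.ne hb)
  obtain rfl | hij := eq_or_ne i j
  · rw [Equiv.swap_self, Equiv.coe_refl, comp_id]
    exact .refl
  have hii' : i ≠ i' := by rintro rfl; exact hp hi.symm
  have hji' : j ≠ i' := by rintro rfl; exact hq hj.symm
  have h₁ := hpm ν hinj hs i i' hi rfl
  have h₂ := hmq (ν ∘ Equiv.swap i i') (hinj.comp (Equiv.injective _)) (hs.comp_perm _) i j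
    (by simp) (by simp [Equiv.swap_apply_of_ne_of_ne hij.symm hji', hj])
  have h₃ := hpm (ν ∘ Equiv.swap i i' ∘ Equiv.swap i j)
    ((hinj.comp (Equiv.injective _)).comp (Equiv.injective _)) ((hs.comp_perm _).comp_perm _)
    i' j (by simp [Equiv.swap_apply_of_ne_of_ne hii'.symm hji'.symm, hi]) (by simp)
  rw [← swap_mul_swap_mul_swap_of_ne hij hii' hji']
  exact h₁.trans (h₂.trans h₃)

lemma swappable_of_joins_same (hp : joins p X Y) (hq : joins q X Y) : Swappable ℓ p q := by
  rintro r ν hinj - i j rfl rfl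
  obtain rfl | hij := eq_or_ne i j
  · rw [Equiv.swap_self, Equiv.coe_refl, comp_id]
    exact .refl
  exact .single (.inl (dMove_comp_swap (hinj.ne hij) hp hq))

lemma swappable_of_joins_ell_right (hn : 0 < n) (hp : joins p X Y)
    (hq : joins q X (Sum.inl ℓ)) (hY : Y ≠ Sum.inl ℓ) : Swappable ℓ p q := by
  rintro r ν - hs i j rfl rfl
  obtain ⟨u, hu, hur⟩ := hs.exists_notMem_range hn hY
  exact .single (.inr (tMove_comp_swap hp hq hu hur))

lemma swappable_of_joins_ell_left (hn : 0 < n) (hp : joins p (Sum.inl ℓ) Y)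
    (hq : joins q (Sum.inl ℓ) Z) (hYZ : Y ≠ Z) (hY : Y ≠ Sum.inl ℓ) (hZ : Z ≠ Sum.inl ℓ) :
    Swappable ℓ p q := by
  rcases Y with a | f
  · rcases Z with b | g
    · obtain ⟨m, hm⟩ := exists_joins_inl_inl (k := k) hn fun h => hYZ (congrArg _ h)
      exact (swappable_of_joins_ell_right hn hm hp.symm hZ).symm.trans
        (swappable_of_joins_ell_right hn hm.symm hq.symm hY)
        (ne_of_joins_of_joins hp.symm hm hZ.symm) (ne_of_joins_of_joins hq.symm hm.symm hY.symm)
        hm (fun h => hY (congrArg _ h)) (fun h => hZ (congrArg _ h))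
    · rintro r ν - hs - i - rfl
      exact absurd (joins_inl_inr_iff.1 hq) (hs.ne_inr i g)
  · rintro r ν - hs i - rfl
    exact absurd (joins_inl_inr_iff.1 hp) (hs.ne_inr i f)

lemma swappable_of_joins_ne_ell (hn : 0 < n) (hp : joins p X Y) (hq : joins q X Z)
    (hYZ : Y ≠ Z) (hX : X ≠ Sum.inl ℓ) (hY : Y ≠ Sum.inl ℓ) (hZ : Z ≠ Sum.inl ℓ) :
    Swappable ℓ p q := by
  rintro r ν hinj hs i j rfl rfl
  obtain ⟨u, hu, hur⟩ := hs.exists_notMem_range hn hX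
  obtain ⟨w₁, hw₁, hw₁r⟩ := hs.exists_notMem_range hn hY
  obtain ⟨w₂, hw₂, hw₂r⟩ := hs.exists_notMem_range hn hZ
  have hij : i ≠ j := fun h => ne_of_joins_of_joins hp hq hYZ (congrArg ν h)
  have hiu : ν i ≠ u := fun h => hur ⟨i, h⟩
  set ν' := ν ∘ Equiv.swap i j
  have hν' : ν' j = ν i := by simp [ν']
  have h₁ : TMove ν (update ν i u) := tMove_update hp hu hw₁ hur hw₁r
  have h₂ : TMove (update ν i u) (update ν' j u) := by
    rw [← Equiv.swap_apply_left i j, ← Equiv.symm_swap, ← update_comp_equiv]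
    refine tMove_comp_swap (by simpa using hu) (by simpa [hij.symm] using hq) hw₂.symm ?_
    exact notMem_range_update (fun x _ hx => hw₂r ⟨x, hx⟩)
      (ne_of_joins_of_joins hw₂.symm hu.symm hq.ne.symm)
  have h₃ : TMove (update ν' j u) (update (update ν' j u) j (ν i)) :=
    tMove_update_of_apply_eq (by simp) hp hu hw₁
      (notMem_range_update (fun x hx h => hx ((hinj.comp (Equiv.injective _)) (h.trans hν'.symm)))
        hiu)
      (notMem_range_update (fun x _ hx => hw₁r ⟨_, hx⟩)
        (ne_of_joins_of_joins hw₁.symm hu.symm hp.ne.symm))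
  rw [update_idem, ← hν', update_eq_self] at h₃
  exact ((ReflTransGen.single (.inr h₁)).tail (.inr h₂)).tail (.inr h₃)

lemma swappable_of_joins_common (hn : 0 < n) (hp : joins p X Y) (hq : joins q X Z) :
    Swappable ℓ p q := by
  obtain rfl | hYZ := eq_or_ne Y Z
  · exact swappable_of_joins_same hp hq
  by_cases hY : Y = Sum.inl ℓ
  · subst hY
    exact (swappable_of_joins_ell_right hn hq hp hYZ.symm).symm
  by_cases hZ : Z = Sum.inl ℓ
  · subst hZ
    exact swappable_of_joins_ell_right hn hp hq hY
  by_cases hX : X = Sum.inl ℓ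
  · subst hX
    exact swappable_of_joins_ell_left hn hp hq hYZ hY hZ
  exact swappable_of_joins_ne_ell hn hp hq hYZ hX hY hZ

theorem swappable (hn : 0 < n) (p q : Node n d k) : Swappable ℓ p q := by
  by_cases hshare : ∃ X Y Z, joins p X Y ∧ joins q X Z
  · obtain ⟨X, Y, Z, hp, hq⟩ := hshare
    exact swappable_of_joins_common hn hp hq
  intro r ν hinj hs i j hi hj
  obtain ⟨a, _, ha, hpa⟩ := exists_joins_inl_ne p (hi ▸ hs.ne_inr i)
  obtain ⟨c, _, hc, hqc⟩ := exists_joins_inl_ne q (hj ▸ hs.ne_inr j)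
  have hac : a ≠ c := by rintro rfl; exact hshare ⟨_, _, _, hpa, hqc⟩
  obtain ⟨m, hm⟩ := exists_joins_inl_inl (k := k) hn hac
  have hpm : p ≠ m := by rintro rfl; exact hshare ⟨_, _, _, hm.symm, hqc⟩
  have hqm : q ≠ m := by rintro rfl; exact hshare ⟨_, _, _, hpa, hm⟩
  exact (swappable_of_joins_common hn hpa hm).trans (swappable_of_joins_common hn hm.symm hqc)
    hpm hqm hm ha hc ν hinj hs i j hi hj

end Swappable

theorem markEquiv_comp_perm (hn : 0 < n) {ℓ : Fin d} {r : ℕ} {ν : Fin r → Node n d k}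
    (hinj : Injective ν) (hs : PropertyStar (Sum.inl ℓ) ν) (σ : Equiv.Perm (Fin r)) :
    MarkEquiv ν (ν ∘ σ) := by
  induction σ using Equiv.Perm.swap_induction_on' with
  | one => exact .refl
  | mul_swap σ i j _ ih =>
    rw [Equiv.Perm.coe_mul, ← Function.comp_assoc]
    exact ih.trans (swappable hn _ _ _ (hinj.comp σ.injective) (hs.comp_perm σ) i j rfl rfl)

/-- Assume `n > 0` and let `r = k(d−1) + n·d(d−1)/2 − (d−1)`. If
`μ = (p_1, …, p_r)` is an `r`-marking on the curve `Γ` satisfying property (*), then for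
every permutation `τ` of `{1, …, r}` the `r`-marking `τ(μ) = (p_{τ(1)}, …, p_{τ(r)})` is
equivalent to `μ` under D-moves and T-moves. -/
theorem stmt6 (n d k : ℕ) (hn : 0 < n) (hd : 0 < d)
    (μ : Fin (k * (d - 1) + n * (d * (d - 1) / 2) - (d - 1)) → Node n d k)
    (hμ : Function.Injective μ)
    (hs : PropertyStar (Sum.inl ⟨d - 1, by omega⟩) μ)
    (τ : Equiv.Perm (Fin (k * (d - 1) + n * (d * (d - 1) / 2) - (d - 1)))) :
    MarkEquiv μ (μ ∘ τ) :=
  markEquiv_comp_perm hn hμ hs τ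

end SeveriMarkings
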